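/- arXiv:2404.04382 — 2 statements merged into one kernel-verified Lean document; each statement's English description precedes it below -/
import Mathlib

section
/- Let n ≥ 1 and let C ⊆ ℝ^{n+1} (Euclidean space) be a Borel-measurable cone (r • C = C for every real r > 0) with H^n(C ∩ B_1(0)) < ∞. Then for every t₀ > 0, ∫_C exp(−‖x‖²/(4t₀)) dH^n(x) = (4πt₀)^{n/2} · H^n(C ∩ B_1(0))/ω_n. In other words, the Gaussian density (4πt₀)^{−n/2} ∫_C exp(−‖x‖²/(4t₀)) dH^n of the cone centered at the origin is independent of t₀ and equals the density Θ(C) = H^n(C ∩ B_1(0))/ω_n of the cone at its vertex. -/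
/-!
Substituting `s = e^{-u}` in the layer-cake formula turns `∫ exp (-a) dν` into
`∫₀^∞ e^{-u} ν {a < u} du`. For `a x = ‖x‖² / (4 t₀)` the sublevel sets are the balls of radius
`√(4 t₀ u)`, and for a cone `H^n (C ∩ B_r) = r^n H^n (C ∩ B_1)` by the scaling of Hausdorff measure.
The Gaussian integral is therefore `H^n (C ∩ B_1) (4 t₀)^{n/2} ∫₀^∞ e^{-u} u^{n/2} du
= H^n (C ∩ B_1) (4 t₀)^{n/2} Γ(n/2 + 1)`, which is `(4π t₀)^{n/2} H^n (C ∩ B_1) / ω_n`.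
-/

open MeasureTheory Metric Pointwise

/-- `ω_n`, the volume of the unit ball in `ℝ^n`. -/
noncomputable def unitBallVolume (n : ℕ) : ℝ :=
  Real.pi ^ ((n : ℝ) / 2) / Real.Gamma ((n : ℝ) / 2 + 1)

open Real Set
open scoped ENNReal

theorem Real.ofReal_Gamma_eq_lintegral {s : ℝ} (hs : 0 < s) :
    ENNReal.ofReal (Gamma s) = ∫⁻ u in Ioi 0, ENNReal.ofReal (exp (-u) * u ^ (s - 1)) := by
  rw [Gamma_eq_integral hs, ofReal_integral_eq_lintegral_ofReal (GammaIntegral_convergent hs)]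
  filter_upwards [self_mem_ae_restrict measurableSet_Ioi] with u hu
  exact mul_nonneg (exp_pos _).le (rpow_nonneg (le_of_lt hu) _)

theorem lintegral_exp_neg_eq_lintegral_meas_lt {α : Type*} [MeasurableSpace α] (ν : Measure α)
    {a : α → ℝ} (ha : Measurable a) (ha₀ : ∀ x, 0 ≤ a x) :
    ∫⁻ x, ENNReal.ofReal (exp (-a x)) ∂ν =
      ∫⁻ u in Ioi 0, ν {x | a x < u} * ENNReal.ofReal (exp (-u)) := by
  have himage : (fun u : ℝ => exp (-u)) '' Ioi 0 = Ioo 0 1 := by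
    rw [← image_image exp Neg.neg, image_neg_Ioi, neg_zero, image_exp_Iio, exp_zero]
  have hlevel : EqOn (fun s => ν {x | s < exp (-a x)}) 0 (Ici 1) := fun s hs => by
    have : {x | s < exp (-a x)} = ∅ :=
      eq_empty_of_forall_notMem fun x hx =>
        (hx.trans_le ((exp_le_one_iff.mpr (neg_nonpos.mpr (ha₀ x))).trans hs)).false
    simp [this]
  calc ∫⁻ x, ENNReal.ofReal (exp (-a x)) ∂ν
      = ∫⁻ s in Ioi 0, ν {x | s < exp (-a x)} :=
        lintegral_eq_lintegral_meas_lt ν (ae_of_all _ fun x => (exp_pos _).le)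
          (ha.neg.exp).aemeasurable
    _ = ∫⁻ s in Ioo 0 1, ν {x | s < exp (-a x)} := by
        rw [← Ioo_union_Ici_eq_Ioi zero_lt_one,
          lintegral_union measurableSet_Ici ((Iio_disjoint_Ici le_rfl).mono_left Ioo_subset_Iio_self),
          setLIntegral_congr_fun measurableSet_Ici hlevel, lintegral_zero_fun, add_zero]
    _ = ∫⁻ u in Ioi 0, ENNReal.ofReal |exp (-u) * -1| * ν {x | exp (-u) < exp (-a x)} := by
        rw [← himage]
        exact lintegral_image_eq_lintegral_abs_deriv_mul measurableSet_Ioi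
          (fun u _ => (hasDerivAt_neg u).exp.hasDerivWithinAt)
          (fun u _ v _ huv => neg_injective (exp_injective huv)) _
    _ = ∫⁻ u in Ioi 0, ν {x | a x < u} * ENNReal.ofReal (exp (-u)) := by
        refine lintegral_congr fun u => ?_
        rw [mul_neg_one, abs_neg, abs_of_pos (exp_pos _), mul_comm]
        simp only [exp_lt_exp, neg_lt_neg_iff]

theorem lintegral_exp_neg_norm_sq_div_of_measure_ball {E : Type*} [SeminormedAddCommGroup E]
    [MeasurableSpace E] [OpensMeasurableSpace E] (ν : Measure E) {d : ℝ} (hd : 0 ≤ d)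
    {m : ℝ≥0∞} (hν : ∀ r : ℝ, 0 < r → ν (ball 0 r) = ENNReal.ofReal r ^ d * m)
    {t : ℝ} (ht : 0 < t) :
    ∫⁻ x, ENNReal.ofReal (exp (-‖x‖ ^ 2 / (4 * t))) ∂ν =
      ENNReal.ofReal ((4 * t) ^ (d / 2) * Gamma (d / 2 + 1)) * m := by
  have hsublevel : ∀ u > 0, {x : E | ‖x‖ ^ 2 / (4 * t) < u} = ball 0 √(4 * t * u) := by
    intro u hu
    ext x
    rw [mem_ofPred_eq, mem_ball_zero_iff, div_lt_iff₀ (by positivity),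
      lt_sqrt (norm_nonneg x), mul_comm u]
  have hradius : ∀ u > 0, ENNReal.ofReal √(4 * t * u) ^ d =
      ENNReal.ofReal ((4 * t) ^ (d / 2)) * ENNReal.ofReal (u ^ (d / 2)) := by
    intro u hu
    rw [ENNReal.ofReal_rpow_of_nonneg (sqrt_nonneg _) hd, sqrt_eq_rpow, ← rpow_mul (by positivity),
      one_div_mul_eq_div, mul_rpow (by positivity) hu.le, ENNReal.ofReal_mul (by positivity)]
  simp_rw [neg_div]
  rw [lintegral_exp_neg_eq_lintegral_meas_lt ν (by fun_prop) fun x => by positivity]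
  calc ∫⁻ u in Ioi 0, ν {x | ‖x‖ ^ 2 / (4 * t) < u} * ENNReal.ofReal (exp (-u))
      = ∫⁻ u in Ioi 0, ENNReal.ofReal ((4 * t) ^ (d / 2)) * m *
          ENNReal.ofReal (exp (-u) * u ^ (d / 2 + 1 - 1)) := by
        refine setLIntegral_congr_fun measurableSet_Ioi fun u hu => ?_
        rw [hsublevel u hu, hν _ (by simpa using mul_pos (mul_pos four_pos ht) hu), hradius u hu,
          add_sub_cancel_right, ENNReal.ofReal_mul (exp_pos _).le]
        ring
    _ = ENNReal.ofReal ((4 * t) ^ (d / 2) * Gamma (d / 2 + 1)) * m := by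
        rw [lintegral_const_mul _ (by fun_prop), ← ofReal_Gamma_eq_lintegral (by positivity),
          ENNReal.ofReal_mul (by positivity)]
        ring

theorem hausdorffMeasure_cone_inter_ball {E : Type*} [NormedAddCommGroup E] [NormedSpace ℝ E]
    [MeasurableSpace E] [BorelSpace E] {d : ℝ} (hd : 0 ≤ d) {C : Set E}
    (hC : ∀ r : ℝ, 0 < r → r • C = C) {r : ℝ} (hr : 0 < r) :
    μH[d] (C ∩ ball 0 r) = ENNReal.ofReal r ^ d * μH[d] (C ∩ ball 0 1) := by
  rw [← smul_unitBall_of_pos hr, ← hC r hr, ← Set.smul_set_inter₀ hr.ne', hC r hr,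
    Measure.hausdorffMeasure_smul₀ hd hr.ne', ENNReal.smul_def, smul_eq_mul,
    ENNReal.coe_rpow_of_nonneg _ hd, ← enorm_eq_nnnorm, ← ofReal_norm, norm_of_nonneg hr.le]

theorem cone_gaussian_density_eq_density_general (n : ℕ)
    (C : Set (EuclideanSpace ℝ (Fin (n + 1))))
    (hcone : ∀ r : ℝ, 0 < r → r • C = C) :
    ∀ t₀ : ℝ, 0 < t₀ →
      ∫ x in C, Real.exp (-‖x‖ ^ 2 / (4 * t₀)) ∂(μH[n]) =
        (4 * Real.pi * t₀) ^ ((n : ℝ) / 2) *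
          ((μH[n] (C ∩ ball 0 1)).toReal / unitBallVolume n) := by
  intro t₀ ht₀
  have hball : ∀ r : ℝ, 0 < r →
      μH[n].restrict C (ball 0 r) = ENNReal.ofReal r ^ (n : ℝ) * μH[n] (C ∩ ball 0 1) :=
    fun r hr => by
      rw [Measure.restrict_apply measurableSet_ball, inter_comm,
        hausdorffMeasure_cone_inter_ball n.cast_nonneg hcone hr]
  rw [integral_eq_lintegral_of_nonneg_ae (ae_of_all _ fun x => (exp_pos _).le) (by fun_prop),
    lintegral_exp_neg_norm_sq_div_of_measure_ball _ n.cast_nonneg hball ht₀, ENNReal.toReal_mul,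
    ENNReal.toReal_ofReal (by positivity), unitBallVolume, mul_right_comm 4 π,
    mul_rpow (by positivity) pi_pos.le]
  have hΓ : Gamma ((n : ℝ) / 2 + 1) ≠ 0 := (Gamma_pos_of_pos (by positivity)).ne'
  have hπ : π ^ ((n : ℝ) / 2) ≠ 0 := (rpow_pos_of_pos pi_pos _).ne'
  field_simp

theorem cone_gaussian_density_eq_density (n : ℕ) (hn : 1 ≤ n)
    (C : Set (EuclideanSpace ℝ (Fin (n + 1))))
    (hC : MeasurableSet C)
    (hcone : ∀ r : ℝ, 0 < r → r • C = C)
    (hfin : μH[n] (C ∩ ball 0 1) < ⊤) :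
    ∀ t₀ : ℝ, 0 < t₀ →
      ∫ x in C, Real.exp (-‖x‖ ^ 2 / (4 * t₀)) ∂(μH[n]) =
        (4 * Real.pi * t₀) ^ ((n : ℝ) / 2) *
          ((μH[n] (C ∩ ball 0 1)).toReal / unitBallVolume n) :=
  cone_gaussian_density_eq_density_general n C hcone
end

section
/- Let n ≥ 1 and let C ⊆ ℝ^{n+1} (Euclidean space) be a Borel-measurable cone (r • C = C for every real r > 0) with H^n(C ∩ B_1(0)) < ∞. Then the Colding–Minicozzi entropy of C is at least its density at the vertex: λ(C) ≥ Θ(C) = H^n(C ∩ B_1(0))/ω_n. -/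
open MeasureTheory Metric Pointwise ENNReal

/-- The Colding–Minicozzi entropy of a set `S ⊆ ℝ^{n+1}`, a supremum in `[0,∞]`. -/
noncomputable def entropy (n : ℕ) (S : Set (EuclideanSpace ℝ (Fin (n + 1)))) : ℝ≥0∞ :=
  ⨆ (x₀ : EuclideanSpace ℝ (Fin (n + 1))) (t₀ : ℝ) (_ : 0 < t₀),
    ENNReal.ofReal ((4 * Real.pi * t₀) ^ (-(n : ℝ) / 2)) *
      ∫⁻ x in S, ENNReal.ofReal (Real.exp (-‖x - x₀‖ ^ 2 / (4 * t₀))) ∂(μH[n])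

/-!
Scaling gives `μH[n] (C ∩ ball 0 r) = r ^ n * μH[n] (C ∩ ball 0 1)`, i.e. `Θ(C)` times the Lebesgue
measure of the `r`-ball of `ℝⁿ`. Hence the push-forwards under the norm of `μH[n]` restricted to `C`
and of `Θ(C)` times Lebesgue measure on `ℝⁿ` agree, so every radial integral over `C` is `Θ(C)` times
the corresponding integral over `ℝⁿ`. For the heat kernel centred at the vertex this says that the
Gaussian density of `C` equals `Θ(C)` at every scale, and the entropy is a supremum of such densities.
-/

section RadialComparison

variable {E F : Type*} [NormedAddCommGroup E] [MeasurableSpace E] [BorelSpace E]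
  [NormedAddCommGroup F] [MeasurableSpace F] [BorelSpace F]

theorem map_norm_apply_Ico (μ : Measure E) {a b : ℝ} (hab : a ≤ b) (ha : μ (ball 0 a) ≠ ∞) :
    μ.map (‖·‖) (Set.Ico a b) = μ (ball 0 b) - μ (ball 0 a) := by
  have hpre : (‖·‖) ⁻¹' Set.Ico a b = ball (0 : E) b \ ball 0 a := by
    ext x
    simp [and_comm]
  rw [Measure.map_apply measurable_norm measurableSet_Ico, hpre,
    measure_sdiff (ball_subset_ball hab) measurableSet_ball.nullMeasurableSet ha]

theorem map_norm_eq_smul_of_measure_ball_eq [ProperSpace F] {μ : Measure E} {ν : Measure F}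
    [IsFiniteMeasureOnCompacts ν] {c : ℝ≥0∞} (hc : c ≠ ∞)
    (h : ∀ r : ℝ, 0 < r → μ (ball 0 r) = c * ν (ball 0 r)) :
    μ.map (‖·‖) = c • ν.map (‖·‖) := by
  have hball : ∀ r : ℝ, μ (ball 0 r) = c * ν (ball 0 r) := by
    intro r
    rcases le_or_gt r 0 with hr | hr
    · simp [ball_eq_empty.mpr hr]
    · exact h r hr
  have hν : ∀ r : ℝ, ν (ball 0 r) ≠ ∞ := fun r => measure_ball_lt_top.ne
  have hμ : ∀ r : ℝ, μ (ball 0 r) ≠ ∞ := fun r => by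
    rw [hball]
    exact mul_ne_top hc (hν r)
  refine Measure.ext_of_Ico' _ _ (fun a b hab => ?_) (fun a b hab => ?_)
  · rw [map_norm_apply_Ico μ hab.le (hμ a)]
    exact (tsub_le_self.trans_lt (hμ b).lt_top).ne
  · rw [Measure.smul_apply, map_norm_apply_Ico μ hab.le (hμ a),
      map_norm_apply_Ico ν hab.le (hν a), hball, hball, smul_eq_mul,
      ENNReal.mul_sub fun _ _ => hc]

theorem lintegral_comp_norm_eq_mul_of_measure_ball_eq [ProperSpace F] {μ : Measure E}
    {ν : Measure F} [IsFiniteMeasureOnCompacts ν] {c : ℝ≥0∞} (hc : c ≠ ∞)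
    (h : ∀ r : ℝ, 0 < r → μ (ball 0 r) = c * ν (ball 0 r)) {f : ℝ → ℝ≥0∞} (hf : Measurable f) :
    ∫⁻ x, f ‖x‖ ∂μ = c * ∫⁻ y, f ‖y‖ ∂ν := by
  rw [← lintegral_map hf measurable_norm, ← lintegral_map hf measurable_norm,
    map_norm_eq_smul_of_measure_ball_eq hc h, lintegral_smul_measure, smul_eq_mul]

end RadialComparison

theorem measure_inter_ball_of_isCone {E : Type*} [NormedAddCommGroup E] [NormedSpace ℝ E]
    [MeasurableSpace E] [BorelSpace E] {d : ℝ} (hd : 0 ≤ d) {C : Set E}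
    (hC : ∀ r : ℝ, 0 < r → r • C = C) {r : ℝ} (hr : 0 < r) :
    μH[d] (C ∩ ball 0 r) = ENNReal.ofReal (r ^ d) * μH[d] (C ∩ ball 0 1) := by
  rw [← smul_unitBall_of_pos hr, ← hC r hr, ← Set.smul_set_inter₀ hr.ne',
    Measure.hausdorffMeasure_smul₀ hd hr.ne', hC r hr, ENNReal.smul_def, smul_eq_mul,
    Real.nnnorm_of_nonneg hr.le, ← ENNReal.ofReal_coe_nnreal, NNReal.coe_rpow, NNReal.coe_mk]

theorem lintegral_exp_neg_sq_norm_div {V : Type*} [NormedAddCommGroup V]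
    [InnerProductSpace ℝ V] [FiniteDimensional ℝ V] [MeasurableSpace V] [BorelSpace V]
    {t : ℝ} (ht : 0 < t) :
    ∫⁻ v : V, ENNReal.ofReal (Real.exp (-‖v‖ ^ 2 / (4 * t))) =
      ENNReal.ofReal ((4 * Real.pi * t) ^ (Module.finrank ℝ V / 2 : ℝ)) := by
  have hint := GaussianFourier.integral_rexp_neg_mul_sq_norm (V := V) (b := 1 / (4 * t))
    (by positivity)
  have hrw : Real.pi / (1 / (4 * t)) = 4 * Real.pi * t := by field_simp
  have hexp (v : V) : -(1 / (4 * t)) * ‖v‖ ^ 2 = -‖v‖ ^ 2 / (4 * t) := by ring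
  simp only [hexp, hrw] at hint
  rw [← hint, ofReal_integral_eq_lintegral_ofReal]
  · exact Integrable.of_integral_ne_zero (by rw [hint]; positivity)
  · exact Filter.Eventually.of_forall fun v => (Real.exp_pos _).le

theorem volume_ball_euclideanSpace_fin {n : ℕ} (hn : 1 ≤ n) (r : ℝ) :
    volume (ball (0 : EuclideanSpace ℝ (Fin n)) r) =
      ENNReal.ofReal r ^ n * ENNReal.ofReal (unitBallVolume n) := by
  have : Nonempty (Fin n) := ⟨⟨0, hn⟩⟩
  rw [EuclideanSpace.volume_ball, Fintype.card_fin, unitBallVolume, Real.sqrt_eq_rpow,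
    ← Real.rpow_natCast, ← Real.rpow_mul Real.pi_pos.le, one_div_mul_eq_div]

theorem unitBallVolume_pos (n : ℕ) : 0 < unitBallVolume n := by
  unfold unitBallVolume
  have := Real.Gamma_pos_of_pos (by positivity : (0 : ℝ) < n / 2 + 1)
  positivity

theorem setLIntegral_exp_neg_sq_norm_div_of_isCone {n : ℕ} (hn : 1 ≤ n)
    {C : Set (EuclideanSpace ℝ (Fin (n + 1)))} (hcone : ∀ r : ℝ, 0 < r → r • C = C)
    (hfin : μH[n] (C ∩ ball 0 1) ≠ ∞) {t : ℝ} (ht : 0 < t) :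
    ∫⁻ x in C, ENNReal.ofReal (Real.exp (-‖x‖ ^ 2 / (4 * t))) ∂μH[n] =
      μH[n] (C ∩ ball 0 1) / ENNReal.ofReal (unitBallVolume n) *
        ENNReal.ofReal ((4 * Real.pi * t) ^ ((n : ℝ) / 2)) := by
  have hω : ENNReal.ofReal (unitBallVolume n) ≠ 0 := (ofReal_pos.mpr (unitBallVolume_pos n)).ne'
  have hball (r : ℝ) (hr : 0 < r) : μH[n].restrict C (ball 0 r) =
      μH[n] (C ∩ ball 0 1) / ENNReal.ofReal (unitBallVolume n) *
        volume (ball (0 : EuclideanSpace ℝ (Fin n)) r) := by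
    rw [Measure.restrict_apply measurableSet_ball, Set.inter_comm,
      measure_inter_ball_of_isCone n.cast_nonneg hcone hr, volume_ball_euclideanSpace_fin hn,
      Real.rpow_natCast, ofReal_pow hr.le, mul_left_comm, ENNReal.div_mul_cancel hω ofReal_ne_top]
  rw [lintegral_comp_norm_eq_mul_of_measure_ball_eq (div_ne_top hfin hω) hball
    (f := fun s => ENNReal.ofReal (Real.exp (-s ^ 2 / (4 * t)))) (by fun_prop),
    lintegral_exp_neg_sq_norm_div ht, finrank_euclideanSpace_fin]

theorem entropy_ge_density_general (n : ℕ) (hn : 1 ≤ n)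
    (C : Set (EuclideanSpace ℝ (Fin (n + 1))))
    (hcone : ∀ r : ℝ, 0 < r → r • C = C)
    (hfin : μH[n] (C ∩ ball 0 1) < ⊤) :
    ENNReal.ofReal ((μH[n] (C ∩ ball 0 1)).toReal / unitBallVolume n) ≤ entropy n C := by
  calc ENNReal.ofReal ((μH[n] (C ∩ ball 0 1)).toReal / unitBallVolume n)
      = μH[n] (C ∩ ball 0 1) / ENNReal.ofReal (unitBallVolume n) := by
        rw [ENNReal.ofReal_div_of_pos (unitBallVolume_pos n), ofReal_toReal hfin.ne]
    _ = ENNReal.ofReal ((4 * Real.pi * 1) ^ (-(n : ℝ) / 2)) *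
        ∫⁻ x in C, ENNReal.ofReal (Real.exp (-‖x - 0‖ ^ 2 / (4 * 1))) ∂μH[n] := by
      simp_rw [sub_zero]
      rw [setLIntegral_exp_neg_sq_norm_div_of_isCone hn hcone hfin.ne one_pos, mul_left_comm,
        ← ofReal_mul (by positivity), ← Real.rpow_add (by positivity), neg_div, neg_add_cancel,
        Real.rpow_zero, ofReal_one, mul_one]
    _ ≤ entropy n C := le_iSup₂_of_le (0 : EuclideanSpace ℝ (Fin (n + 1))) (1 : ℝ)
        (le_iSup_of_le one_pos le_rfl)

theorem entropy_ge_density (n : ℕ) (hn : 1 ≤ n)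
    (C : Set (EuclideanSpace ℝ (Fin (n + 1))))
    (hC : MeasurableSet C)
    (hcone : ∀ r : ℝ, 0 < r → r • C = C)
    (hfin : μH[n] (C ∩ ball 0 1) < ⊤) :
    ENNReal.ofReal ((μH[n] (C ∩ ball 0 1)).toReal / unitBallVolume n) ≤ entropy n C :=
  entropy_ge_density_general n hn C hcone hfin
end
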